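/- arXiv:2301.06644 — 3 statements merged into one kernel-verified Lean document; each statement's English description precedes it below -/
import Mathlib

section
/- Weak duality for the inner problem: for every attack vector z : J → ℝ (values in {0,1}), every (x, q) ∈ S(z), and every dual-feasible tuple (π, μ, σ, η, τ, ν), one has D_z(π, μ, σ, η, τ, ν) ≤ f(x, q). -/
open Finset

variable {m n : ℕ}

/-- The defender's feasible set `S(z)` given the attack vector `z`. -/
def Feas (lam : Fin m → ℝ) (C : Fin n → ℝ) (a : Fin m → Fin n → ℝ)
    (θ β : ℝ) (z : Fin n → ℝ) : Set ((Fin m → Fin n → ℝ) × (Fin m → ℝ)) :=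
  {p | (∀ i j, 0 ≤ p.1 i j) ∧ (∀ i, 0 ≤ p.2 i) ∧
       (∀ j, ∑ i, p.1 i j ≤ C j * (1 - z j)) ∧
       (∀ i, (∑ j, p.1 i j) + p.2 i = lam i) ∧
       (∀ i j, p.1 i j ≤ C j * a i j) ∧
       (∀ i, p.2 i / lam i ≤ θ) ∧
       (∀ i i', |p.2 i / lam i - p.2 i' / lam i'| ≤ β)}

/-- The defender's cost `f(x, q)`. -/
def cost (d : Fin m → Fin n → ℝ) (φ : Fin m → ℝ) (γ : ℝ)
    (p : (Fin m → Fin n → ℝ) × (Fin m → ℝ)) : ℝ :=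
  (1 - γ) * ∑ i, φ i * p.2 i + γ * ∑ i, ∑ j, d i j * p.1 i j

/-- Dual feasibility of the tuple `(π, μ, σ, η, τ, ν)`. -/
def DualFeasible (lam : Fin m → ℝ) (d : Fin m → Fin n → ℝ) (φ : Fin m → ℝ) (γ : ℝ)
    (π : Fin n → ℝ) (μ : Fin m → ℝ) (σ : Fin m → Fin n → ℝ)
    (η τ : Fin m → Fin m → ℝ) (ν : Fin m → ℝ) : Prop :=
  (∀ j, 0 ≤ π j) ∧ (∀ i j, 0 ≤ σ i j) ∧ (∀ i, 0 ≤ ν i) ∧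
  (∀ i i' : Fin m, i < i' → 0 ≤ η i i') ∧ (∀ i i' : Fin m, i < i' → 0 ≤ τ i i') ∧
  (∀ i j, -π j + μ i - σ i j ≤ γ * d i j) ∧
  (∀ i, μ i - (1 / lam i) * (∑ l ∈ univ.filter (fun l => i < l), (η i l - τ i l))
      + (1 / lam i) * (∑ l ∈ univ.filter (fun l => l < i), (η l i - τ l i))
      - ν i / lam i ≤ (1 - γ) * φ i)

/-- The dual objective `D_z(π, μ, σ, η, τ, ν)`. -/
def Dobj (lam : Fin m → ℝ) (C : Fin n → ℝ) (a : Fin m → Fin n → ℝ)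
    (θ β : ℝ) (z : Fin n → ℝ)
    (π : Fin n → ℝ) (μ : Fin m → ℝ) (σ : Fin m → Fin n → ℝ)
    (η τ : Fin m → Fin m → ℝ) (ν : Fin m → ℝ) : ℝ :=
  -(∑ j, C j * (1 - z j) * π j) + ∑ i, lam i * μ i - ∑ i, ∑ j, C j * a i j * σ i j
    - β * ∑ i, ∑ i' ∈ univ.filter (fun i' => i < i'), (η i i' + τ i i')
    - θ * ∑ i, ν i

lemma sum5 {α : Type*} (s : Finset α) (f1 f2 f3 f4 f5 : α → ℝ) :
    ∑ i ∈ s, (f1 i - f2 i + f3 i - f4 i + f5 i)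
      = ∑ i ∈ s, f1 i - ∑ i ∈ s, f2 i + ∑ i ∈ s, f3 i - ∑ i ∈ s, f4 i + ∑ i ∈ s, f5 i := by
  simp [Finset.sum_add_distrib, Finset.sum_sub_distrib]

lemma swap_lt {m : ℕ} (g : Fin m → Fin m → ℝ) :
    ∑ i, ∑ l ∈ univ.filter (fun l => l < i), g l i
      = ∑ i, ∑ l ∈ univ.filter (fun l => i < l), g i l := by
  simp only [Finset.sum_filter]
  exact Finset.sum_comm

theorem stmt_5
    (m n : ℕ) (hm : 1 ≤ m) (hn : 1 ≤ n)
    (lam : Fin m → ℝ) (hlam : ∀ i, 0 < lam i)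
    (C : Fin n → ℝ) (hC : ∀ j, 0 ≤ C j)
    (d : Fin m → Fin n → ℝ) (hd : ∀ i j, 0 ≤ d i j)
    (φ : Fin m → ℝ) (hφ : ∀ i, 0 ≤ φ i)
    (a : Fin m → Fin n → ℝ) (ha : ∀ i j, a i j = 0 ∨ a i j = 1)
    (γ : ℝ) (hγ0 : 0 ≤ γ) (hγ1 : γ ≤ 1)
    (θ β : ℝ) (hθ : 0 ≤ θ) (hβ : 0 ≤ β)
    (z : Fin n → ℝ) (hz : ∀ j, z j = 0 ∨ z j = 1)
    (x : Fin m → Fin n → ℝ) (q : Fin m → ℝ)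
    (hxq : (x, q) ∈ Feas lam C a θ β z)
    (π : Fin n → ℝ) (μ : Fin m → ℝ) (σ : Fin m → Fin n → ℝ)
    (η τ : Fin m → Fin m → ℝ) (ν : Fin m → ℝ)
    (hdual : DualFeasible lam d φ γ π μ σ η τ ν) :
    Dobj lam C a θ β z π μ σ η τ ν ≤ cost d φ γ (x, q) := by
  obtain ⟨hx0, hq0, hcap, hbal, hxa, hθq, hβq⟩ := hxq
  obtain ⟨hπ, hσ, hν, hη, hτ, hd1, hd2⟩ := hdual
  -- nonnegative slack sums
  have hA : 0 ≤ ∑ i, ∑ j, x i j * (γ * d i j + π j + σ i j - μ i) :=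
    Finset.sum_nonneg fun i _ => Finset.sum_nonneg fun j _ =>
      mul_nonneg (hx0 i j) (by linarith [hd1 i j])
  have hB : 0 ≤ ∑ i, q i * ((1 - γ) * φ i - μ i
      + (1 / lam i) * (∑ l ∈ univ.filter (fun l => i < l), (η i l - τ i l))
      - (1 / lam i) * (∑ l ∈ univ.filter (fun l => l < i), (η l i - τ l i))
      + ν i / lam i) :=
    Finset.sum_nonneg fun i _ => mul_nonneg (hq0 i) (by linarith [hd2 i])
  have hC' : 0 ≤ ∑ j, (C j * (1 - z j) - ∑ i, x i j) * π j :=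
    Finset.sum_nonneg fun j _ => mul_nonneg (by linarith [hcap j]) (hπ j)
  have hD' : 0 ≤ ∑ i, ∑ j, (C j * a i j - x i j) * σ i j :=
    Finset.sum_nonneg fun i _ => Finset.sum_nonneg fun j _ =>
      mul_nonneg (by linarith [hxa i j]) (hσ i j)
  have hE : 0 ≤ ∑ i, (θ - q i / lam i) * ν i :=
    Finset.sum_nonneg fun i _ => mul_nonneg (by linarith [hθq i]) (hν i)
  have hF : 0 ≤ ∑ i, ∑ l ∈ univ.filter (fun l => i < l),
      (η i l * (β + q l / lam l - q i / lam i)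
        + τ i l * (β - (q l / lam l - q i / lam i))) := by
    refine Finset.sum_nonneg fun i _ => Finset.sum_nonneg fun l hl => ?_
    have hil : i < l := (Finset.mem_filter.mp hl).2
    have habs := abs_le.mp (hβq i l)
    have h1 : 0 ≤ η i l * (β + q l / lam l - q i / lam i) :=
      mul_nonneg (hη i l hil) (by cases habs; linarith)
    have h2 : 0 ≤ τ i l * (β - (q l / lam l - q i / lam i)) :=
      mul_nonneg (hτ i l hil) (by cases habs; linarith)
    linarith
  -- structural equalities
  have hbal' : ∑ i, lam i * μ i = ∑ i, (∑ j, x i j) * μ i + ∑ i, q i * μ i := by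
    rw [← Finset.sum_add_distrib]
    exact Finset.sum_congr rfl fun i _ => by rw [← hbal i]; ring
  have hAeq : ∑ i, ∑ j, x i j * (γ * d i j + π j + σ i j - μ i)
      = γ * (∑ i, ∑ j, d i j * x i j) + ∑ j, (∑ i, x i j) * π j
        + ∑ i, ∑ j, x i j * σ i j - ∑ i, (∑ j, x i j) * μ i := by
    have h1 : ∀ i : Fin m, ∀ j : Fin n,
        x i j * (γ * d i j + π j + σ i j - μ i)
          = γ * (d i j * x i j) + x i j * π j + x i j * σ i j - x i j * μ i :=
      fun i j => by ring
    simp only [h1, Finset.sum_add_distrib, Finset.sum_sub_distrib, ← Finset.mul_sum,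
      ← Finset.sum_mul]
    rw [Finset.sum_comm (f := fun i j => x i j * π j)]
    simp only [← Finset.sum_mul]
  have hswap : ∑ i, (q i / lam i) *
        (∑ l ∈ univ.filter (fun l => l < i), (η l i - τ l i))
      = ∑ i, ∑ l ∈ univ.filter (fun l => i < l), (q l / lam l) * (η i l - τ i l) := by
    simp only [Finset.mul_sum]
    exact swap_lt (fun a b => (q b / lam b) * (η a b - τ a b))
  have hBeq : ∑ i, q i * ((1 - γ) * φ i - μ i
        + (1 / lam i) * (∑ l ∈ univ.filter (fun l => i < l), (η i l - τ i l))
        - (1 / lam i) * (∑ l ∈ univ.filter (fun l => l < i), (η l i - τ l i))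
        + ν i / lam i)
      = (1 - γ) * (∑ i, φ i * q i) - ∑ i, q i * μ i
        + ∑ i, ∑ l ∈ univ.filter (fun l => i < l), (q i / lam i) * (η i l - τ i l)
        - ∑ i, ∑ l ∈ univ.filter (fun l => i < l), (q l / lam l) * (η i l - τ i l)
        + ∑ i, (q i / lam i) * ν i := by
    have h1 : ∀ i : Fin m, q i * ((1 - γ) * φ i - μ i
        + (1 / lam i) * (∑ l ∈ univ.filter (fun l => i < l), (η i l - τ i l))
        - (1 / lam i) * (∑ l ∈ univ.filter (fun l => l < i), (η l i - τ l i))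
        + ν i / lam i)
        = (1 - γ) * (φ i * q i) - q i * μ i
          + (q i / lam i) * (∑ l ∈ univ.filter (fun l => i < l), (η i l - τ i l))
          - (q i / lam i) * (∑ l ∈ univ.filter (fun l => l < i), (η l i - τ l i))
          + (q i / lam i) * ν i := fun i => by ring
    rw [Finset.sum_congr rfl (fun i _ => h1 i), sum5, hswap]
    simp only [Finset.mul_sum]
  have hCeq : ∑ j, (C j * (1 - z j) - ∑ i, x i j) * π j
      = ∑ j, C j * (1 - z j) * π j - ∑ j, (∑ i, x i j) * π j := by
    rw [← Finset.sum_sub_distrib]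
    exact Finset.sum_congr rfl fun j _ => by ring
  have hDeq : ∑ i, ∑ j, (C j * a i j - x i j) * σ i j
      = ∑ i, ∑ j, C j * a i j * σ i j - ∑ i, ∑ j, x i j * σ i j := by
    rw [← Finset.sum_sub_distrib]
    refine Finset.sum_congr rfl fun i _ => ?_
    rw [← Finset.sum_sub_distrib]
    exact Finset.sum_congr rfl fun j _ => by ring
  have hEeq : ∑ i, (θ - q i / lam i) * ν i
      = θ * ∑ i, ν i - ∑ i, (q i / lam i) * ν i := by
    rw [Finset.mul_sum, ← Finset.sum_sub_distrib]
    exact Finset.sum_congr rfl fun i _ => by ring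
  have hFeq : ∑ i, ∑ l ∈ univ.filter (fun l => i < l),
        (η i l * (β + q l / lam l - q i / lam i)
          + τ i l * (β - (q l / lam l - q i / lam i)))
      = β * (∑ i, ∑ i' ∈ univ.filter (fun i' => i < i'), (η i i' + τ i i'))
        + ∑ i, ∑ l ∈ univ.filter (fun l => i < l), (q l / lam l) * (η i l - τ i l)
        - ∑ i, ∑ l ∈ univ.filter (fun l => i < l), (q i / lam i) * (η i l - τ i l) := by
    simp only [Finset.mul_sum, ← Finset.sum_sub_distrib, ← Finset.sum_add_distrib]
    exact Finset.sum_congr rfl fun i _ => Finset.sum_congr rfl fun l _ => by ring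
  simp only [cost, Dobj]
  linarith [hA, hB, hC', hD', hE, hF, hAeq, hBeq, hCeq, hDeq, hEeq, hFeq, hbal']
end

section
/- KKT characterization of the inner problem: let z : J → ℝ be an attack vector (values in {0,1}) and (x, q) ∈ S(z). Then (x, q) minimizes f over S(z) if and only if there exist μ : I → ℝ and nonnegative multipliers π : J → ℝ, σ : I → J → ℝ, ν : I → ℝ, and η, τ : I → I → ℝ (entries with i < i') such that: (i) γ * d i j + π j + μ i + σ i j ≥ 0 and (γ * d i j + π j + μ i + σ i j) * x i j = 0 for all i, j; (ii) setting ρ i = (1 − γ) * φ i + μ i + (1/λ i) * ∑_{l : i < l} (η i l − τ i l) − (1/λ i) * ∑_{l : l < i} (η l i − τ l i) + ν i / λ i, one has ρ i ≥ 0 and ρ i * q i = 0 for every i; (iii) π j * (C j * (1 − z j) − ∑_i x i j) = 0 for every j; (iv) σ i j * (C j * a i j − x i j) = 0 for all i, j; (v) ν i * (θ − q i / λ i) = 0 for every i; (vi) η i i' * (β − q i / λ i + q i' / λ i') = 0 and τ i i' * (q i / λ i − q i' / λ i' + β) = 0 for all i < i'. -/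
open Finset

variable {m n : ℕ}

/-!
The inner problem is a linear program: the feasible set `S(z)` is cut out by finitely many linear
inequalities (each equality being two of them) and `f` is linear. For such a program a feasible
point is optimal iff there are nonnegative multipliers, vanishing on the inactive constraints,
that express `-f` as a combination of the constraint functionals. Sufficiency is weak duality;
necessity is Farkas' lemma applied to the cone of feasible directions at the point. Reading the
multipliers of the individual constraint families off this identity, coordinate by coordinate,
gives conditions (i)–(vi); the fairness constraint is used for all ordered pairs, and its
multipliers for the pairs `(i, i')` and `(i', i)` with `i < i'` become `η i i'` and `τ i i'`.
-/

open Filter Topology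

/-- Farkas' lemma for finitely many linear functionals, proved by Fourier–Motzkin elimination. -/
theorem exists_nonneg_eq_sum_smul_of_forall_nonneg
    {𝕜 E ι : Type*} [Field 𝕜] [LinearOrder 𝕜] [IsStrictOrderedRing 𝕜]
    [AddCommGroup E] [Module 𝕜 E]
    (s : Finset ι) (v : ι → Module.Dual 𝕜 E) (c : Module.Dual 𝕜 E)
    (h : ∀ w, (∀ i ∈ s, 0 ≤ v i w) → 0 ≤ c w) :
    ∃ y : ι → 𝕜, (∀ i, 0 ≤ y i) ∧ c = ∑ i ∈ s, y i • v i := by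
  classical
  induction s using Finset.induction_on generalizing v c with
  | empty =>
    refine ⟨0, fun _ => le_rfl, ?_⟩
    ext w
    have h₁ := h w (by simp)
    have h₂ := h (-w) (by simp)
    simp only [map_neg, Left.nonneg_neg_iff] at h₂
    simp [le_antisymm h₂ h₁]
  | insert a s ha ih =>
    have update_sum (y : ι → 𝕜) (t : 𝕜) :
        ∑ i ∈ s, Function.update y a t i • v i = ∑ i ∈ s, y i • v i :=
      Finset.sum_congr rfl fun i hi => by
        rw [Function.update_of_ne (ne_of_mem_of_not_mem hi ha)]
    by_cases hs : ∀ w, (∀ i ∈ s, 0 ≤ v i w) → 0 ≤ c w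
    · obtain ⟨y, hy, rfl⟩ := ih v c hs
      refine ⟨Function.update y a 0, fun i => ?_, ?_⟩
      · rcases eq_or_ne i a with rfl | hia <;> simp [*]
      · rw [Finset.sum_insert ha, update_sum, Function.update_self, zero_smul, zero_add]
    push Not at hs
    obtain ⟨w₀, hw₀, hcw₀⟩ := hs
    have hvw₀ : v a w₀ < 0 := by
      by_contra! hva
      exact hcw₀.not_ge <| h w₀ <| by simpa [hva] using hw₀
    -- Eliminate `v a`: the functionals `proj u` vanish at `w₀`, and the hypothesis passes to them
    -- through the directions `w - (v a w / v a w₀) • w₀`, on which `v a` vanishes.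
    set proj : Module.Dual 𝕜 E → Module.Dual 𝕜 E := fun u => u - (u w₀ / v a w₀) • v a
    have hproj : ∀ w, (∀ i ∈ s, 0 ≤ proj (v i) w) → 0 ≤ proj c w := by
      intro w hw
      have key : ∀ u : Module.Dual 𝕜 E, u (w - (v a w / v a w₀) • w₀) = proj u w := by
        intro u
        simp only [proj, map_sub, map_smul, LinearMap.sub_apply, LinearMap.smul_apply, smul_eq_mul]
        field_simp
      rw [← key]
      refine h _ fun i hi => ?_
      rcases Finset.mem_insert.mp hi with rfl | hi
      · rw [key]; simp [proj, hvw₀.ne]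
      · rw [key]; exact hw i hi
    obtain ⟨y, hy, hcy⟩ := ih (fun i => proj (v i)) (proj c) hproj
    set t := (c w₀ - ∑ i ∈ s, y i * v i w₀) / v a w₀
    have ht : 0 ≤ t := by
      refine div_nonneg_of_nonpos ?_ hvw₀.le
      have : 0 ≤ ∑ i ∈ s, y i * v i w₀ :=
        Finset.sum_nonneg fun i hi => mul_nonneg (hy i) (hw₀ i hi)
      linarith
    refine ⟨Function.update y a t, fun i => ?_, ?_⟩
    · rcases eq_or_ne i a with rfl | hia <;> simp [*]
    rw [Finset.sum_insert ha, Function.update_self, update_sum]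
    ext w
    have hcw := LinearMap.congr_fun hcy w
    simp only [proj, LinearMap.sub_apply, LinearMap.smul_apply, smul_eq_mul, LinearMap.sum_apply,
      mul_sub, Finset.sum_sub_distrib] at hcw
    simp only [LinearMap.add_apply, LinearMap.smul_apply, smul_eq_mul, LinearMap.sum_apply, t]
    have hsum : ∑ i ∈ s, y i * (v i w₀ / v a w₀ * v a w) =
        (∑ i ∈ s, y i * v i w₀) / v a w₀ * v a w := by
      rw [Finset.sum_div, Finset.sum_mul]
      exact Finset.sum_congr rfl fun i _ => by ring
    rw [hsum] at hcw
    have hne := hvw₀.ne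
    field_simp at hcw ⊢
    linear_combination hcw

lemma eventually_add_mul_le {A B s : ℝ} (h : A ≤ B) (hs : A = B → s ≤ 0) :
    ∀ᶠ t in 𝓝[>] 0, A + t * s ≤ B := by
  rcases h.eq_or_lt with rfl | hlt
  · filter_upwards [self_mem_nhdsWithin] with t (ht : 0 < t)
    nlinarith [hs rfl]
  · have : Tendsto (fun t : ℝ => A + t * s) (𝓝[>] 0) (𝓝 A) := by
      have : Continuous (fun t : ℝ => A + t * s) := by fun_prop
      simpa using (this.tendsto 0).mono_left nhdsWithin_le_nhds
    exact this.eventually (eventually_le_nhds hlt)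

theorem isMinOn_iff_exists_kkt {ι E : Type*} [Fintype ι] [AddCommGroup E] [Module ℝ E]
    (g : ι → Module.Dual ℝ E) (b : ι → ℝ) (c : Module.Dual ℝ E) {x₀ : E}
    (hx₀ : ∀ i, g i x₀ ≤ b i) :
    IsMinOn c {x | ∀ i, g i x ≤ b i} x₀ ↔
      ∃ y : ι → ℝ, (∀ i, 0 ≤ y i) ∧ (∀ i, y i * (b i - g i x₀) = 0) ∧
        c + ∑ i, y i • g i = 0 := by
  classical
  constructor
  · intro hmin
    have hdir : ∀ w, (∀ i ∈ univ.filter (fun i => g i x₀ = b i), 0 ≤ (-g i) w) → 0 ≤ c w := by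
      intro w hw
      have hfeas : ∀ᶠ t in 𝓝[>] (0 : ℝ), x₀ + t • w ∈ {x | ∀ i, g i x ≤ b i} := by
        simp only [Set.mem_ofPred_eq, map_add, map_smul, smul_eq_mul, eventually_all]
        exact fun i => eventually_add_mul_le (hx₀ i) fun hi => by simpa using hw i (by simp [hi])
      obtain ⟨t, ht, htpos⟩ := (hfeas.and self_mem_nhdsWithin).exists
      have hle := isMinOn_iff.mp hmin _ ht
      rw [map_add, map_smul, smul_eq_mul] at hle
      exact nonneg_of_mul_nonneg_right (by linarith) htpos
    obtain ⟨y, hy, hc⟩ := exists_nonneg_eq_sum_smul_of_forall_nonneg _ (fun i => -g i) c hdir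
    refine ⟨fun i => if g i x₀ = b i then y i else 0, fun i => ?_, fun i => ?_, ?_⟩
    · dsimp only; split_ifs <;> simp [hy i]
    · dsimp only; split_ifs with hi <;> simp [hi]
    · simp [hc, Finset.sum_filter, ite_smul]
  · rintro ⟨y, hy, hslack, hstat⟩
    refine isMinOn_iff.mpr fun x hx => ?_
    have hval : ∀ x, c x = -∑ i, y i * g i x := fun x => by
      have hx := LinearMap.congr_fun hstat x
      simp only [LinearMap.add_apply, LinearMap.sum_apply, LinearMap.smul_apply, smul_eq_mul,
        LinearMap.zero_apply] at hx
      linarith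
    have hsum : ∑ i, y i * g i x ≤ ∑ i, y i * g i x₀ := Finset.sum_le_sum fun i _ => by
      nlinarith [hslack i, hy i, hx i]
    rw [hval, hval]
    linarith

lemma sum_sub_swap_eq_sum_gt_sub_sum_lt {α M : Type*} [Fintype α] [LinearOrder α] [AddCommGroup M]
    (f : α → α → M) (i : α) :
    ∑ l, (f i l - f l i) =
      ∑ l ∈ univ.filter (fun l => i < l), (f i l - f l i)
        - ∑ l ∈ univ.filter (fun l => l < i), (f l i - f i l) := by
  rw [Finset.sum_filter, Finset.sum_filter, ← Finset.sum_sub_distrib]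
  refine Finset.sum_congr rfl fun l _ => ?_
  rcases lt_trichotomy i l with h | rfl | h
  · simp [h, h.not_gt]
  · simp
  · simp [h, h.not_gt]

lemma sum_sum_mul_sub_eq {ι : Type*} [Fintype ι] (ω : ι → ι → ℝ) (f : ι → ℝ) :
    ∑ l, ∑ l', ω l l' * (f l - f l') = ∑ l, (∑ l', (ω l l' - ω l' l)) * f l := by
  simp only [mul_sub, sub_mul, Finset.sum_sub_distrib, Finset.sum_mul]
  rw [Finset.sum_comm (f := fun l l' => ω l l' * f l')]

lemma forall_abs_sub_le_iff {ι : Type*} (r : ι → ℝ) (β : ℝ) :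
    (∀ i i', |r i - r i'| ≤ β) ↔ ∀ i i', r i - r i' ≤ β :=
  ⟨fun h i i' => (abs_le.mp (h i i')).2, fun h i i' => abs_sub_le_iff.mpr ⟨h i i', h i' i⟩⟩

namespace EdgeAllocation

abbrev Plan (m n : ℕ) := (Fin m → Fin n → ℝ) × (Fin m → ℝ)

def flowCoord (i : Fin m) (j : Fin n) : Module.Dual ℝ (Plan m n) :=
  LinearMap.proj j ∘ₗ LinearMap.proj i ∘ₗ LinearMap.fst ℝ _ _

def unmetCoord (i : Fin m) : Module.Dual ℝ (Plan m n) :=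
  LinearMap.proj i ∘ₗ LinearMap.snd ℝ _ _

@[simp] lemma flowCoord_apply (i : Fin m) (j : Fin n) (p : Plan m n) :
    flowCoord i j p = p.1 i j := rfl

@[simp] lemma unmetCoord_apply (i : Fin m) (p : Plan m n) : unmetCoord i p = p.2 i := rfl

def costForm (d : Fin m → Fin n → ℝ) (φ : Fin m → ℝ) (γ : ℝ) : Module.Dual ℝ (Plan m n) :=
  (1 - γ) • ∑ i, φ i • unmetCoord i + γ • ∑ i, ∑ j, d i j • flowCoord i j

lemma costForm_apply (d : Fin m → Fin n → ℝ) (φ : Fin m → ℝ) (γ : ℝ) (p : Plan m n) :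
    costForm d φ γ p = cost d φ γ p := by
  simp [costForm, cost, LinearMap.sum_apply]

inductive Constraint (m n : ℕ)
  | flowNonneg (i : Fin m) (j : Fin n)
  | unmetNonneg (i : Fin m)
  | capacity (j : Fin n)
  | demandLE (i : Fin m)
  | demandGE (i : Fin m)
  | eligibility (i : Fin m) (j : Fin n)
  | unmetRatio (i : Fin m)
  | fairness (i i' : Fin m)

namespace Constraint

def equivSum : Constraint m n ≃ (Fin m × Fin n) ⊕ Fin m ⊕ Fin n ⊕ Fin m ⊕ Fin m ⊕
    (Fin m × Fin n) ⊕ Fin m ⊕ (Fin m × Fin m) where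
  toFun
    | flowNonneg i j => .inl (i, j)
    | unmetNonneg i => .inr (.inl i)
    | capacity j => .inr (.inr (.inl j))
    | demandLE i => .inr (.inr (.inr (.inl i)))
    | demandGE i => .inr (.inr (.inr (.inr (.inl i))))
    | eligibility i j => .inr (.inr (.inr (.inr (.inr (.inl (i, j))))))
    | unmetRatio i => .inr (.inr (.inr (.inr (.inr (.inr (.inl i))))))
    | fairness i i' => .inr (.inr (.inr (.inr (.inr (.inr (.inr (i, i')))))))
  invFun
    | .inl (i, j) => flowNonneg i j
    | .inr (.inl i) => unmetNonneg i
    | .inr (.inr (.inl j)) => capacity j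
    | .inr (.inr (.inr (.inl i))) => demandLE i
    | .inr (.inr (.inr (.inr (.inl i)))) => demandGE i
    | .inr (.inr (.inr (.inr (.inr (.inl (i, j)))))) => eligibility i j
    | .inr (.inr (.inr (.inr (.inr (.inr (.inl i)))))) => unmetRatio i
    | .inr (.inr (.inr (.inr (.inr (.inr (.inr (i, i'))))))) => fairness i i'
  left_inv k := by cases k <;> rfl
  right_inv k := by rcases k with ⟨i, j⟩ | i | j | i | i | ⟨i, j⟩ | i | ⟨i, i'⟩ <;> rfl

instance : Fintype (Constraint m n) := Fintype.ofEquiv _ equivSum.symm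

lemma sum_eq {M : Type*} [AddCommMonoid M] (f : Constraint m n → M) :
    ∑ k, f k = ∑ i, ∑ j, f (flowNonneg i j) + ∑ i, f (unmetNonneg i) + ∑ j, f (capacity j)
      + ∑ i, f (demandLE i) + ∑ i, f (demandGE i) + ∑ i, ∑ j, f (eligibility i j)
      + ∑ i, f (unmetRatio i) + ∑ i, ∑ i', f (fairness i i') := by
  rw [← equivSum.symm.sum_comp]
  simp [Fintype.sum_sum_type, Fintype.sum_prod_type, add_assoc, equivSum]

lemma forall_iff (P : Constraint m n → Prop) :
    (∀ k, P k) ↔ (∀ i j, P (flowNonneg i j)) ∧ (∀ i, P (unmetNonneg i)) ∧ (∀ j, P (capacity j))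
      ∧ (∀ i, P (demandLE i)) ∧ (∀ i, P (demandGE i)) ∧ (∀ i j, P (eligibility i j))
      ∧ (∀ i, P (unmetRatio i)) ∧ ∀ i i', P (fairness i i') := by
  refine ⟨fun h => ⟨fun _ _ => h _, fun _ => h _, fun _ => h _, fun _ => h _, fun _ => h _,
    fun _ _ => h _, fun _ => h _, fun _ _ => h _⟩, ?_⟩
  rintro ⟨h₁, h₂, h₃, h₄, h₅, h₆, h₇, h₈⟩ (_ | _ | _ | _ | _ | _ | _ | _) <;> apply_assumption

end Constraint

open Constraint

noncomputable def constraintForm (lam : Fin m → ℝ) : Constraint m n → Module.Dual ℝ (Plan m n)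
  | flowNonneg i j => -flowCoord i j
  | unmetNonneg i => -unmetCoord i
  | capacity j => ∑ i, flowCoord i j
  | demandLE i => ∑ j, flowCoord i j + unmetCoord i
  | demandGE i => -(∑ j, flowCoord i j + unmetCoord i)
  | eligibility i j => flowCoord i j
  | unmetRatio i => (lam i)⁻¹ • unmetCoord i
  | fairness i i' => (lam i)⁻¹ • unmetCoord i - (lam i')⁻¹ • unmetCoord i'

def constraintBound (lam : Fin m → ℝ) (C : Fin n → ℝ) (a : Fin m → Fin n → ℝ)
    (θ β : ℝ) (z : Fin n → ℝ) : Constraint m n → ℝ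
  | flowNonneg _ _ => 0
  | unmetNonneg _ => 0
  | capacity j => C j * (1 - z j)
  | demandLE i => lam i
  | demandGE i => -lam i
  | eligibility i j => C j * a i j
  | unmetRatio _ => θ
  | fairness _ _ => β

lemma feas_eq (lam : Fin m → ℝ) (C : Fin n → ℝ) (a : Fin m → Fin n → ℝ) (θ β : ℝ)
    (z : Fin n → ℝ) :
    Feas lam C a θ β z = {p | ∀ k, constraintForm lam k p ≤ constraintBound lam C a θ β z k} := by
  ext p
  simp only [Feas, Set.mem_ofPred_eq, forall_iff, constraintForm, constraintBound,
    LinearMap.neg_apply, LinearMap.add_apply, LinearMap.sub_apply, LinearMap.sum_apply,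
    LinearMap.smul_apply, flowCoord_apply, unmetCoord_apply, smul_eq_mul, neg_nonpos,
    neg_le_neg_iff, ← div_eq_inv_mul, forall_abs_sub_le_iff, le_antisymm_iff, forall_and, and_assoc]

lemma dual_eq_zero_iff (F : Module.Dual ℝ (Plan m n)) :
    F = 0 ↔ (∀ i j, F (Pi.single i (Pi.single j 1), 0) = 0) ∧ ∀ i, F (0, Pi.single i 1) = 0 := by
  refine ⟨fun h => by simp [h], fun ⟨hx, hq⟩ => ?_⟩
  ext i j
  · simpa using hx i j
  · simpa using hq i

section Lagrangian

variable (d : Fin m → Fin n → ℝ) (φ : Fin m → ℝ) (γ : ℝ) (lam : Fin m → ℝ) (y : Constraint m n → ℝ)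

lemma lagrangian_apply_flow (i : Fin m) (j : Fin n) :
    (costForm d φ γ + ∑ k, y k • constraintForm lam k) (Pi.single i (Pi.single j 1), 0) =
      γ * d i j + y (capacity j) + (y (demandLE i) - y (demandGE i)) + y (eligibility i j)
        - y (flowNonneg i j) := by
  simp [Constraint.sum_eq, constraintForm, costForm, LinearMap.sum_apply, Pi.single_apply,
    ite_apply]
  ring

lemma lagrangian_apply_unmet (i : Fin m) :
    (costForm d φ γ + ∑ k, y k • constraintForm lam k) (0, Pi.single i 1) =
      (1 - γ) * φ i + (y (demandLE i) - y (demandGE i)) + y (unmetRatio i) / lam i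
        + (∑ l, (y (fairness i l) - y (fairness l i))) / lam i - y (unmetNonneg i) := by
  simp only [Constraint.sum_eq, constraintForm, costForm, LinearMap.add_apply, LinearMap.sum_apply,
    LinearMap.smul_apply, LinearMap.sub_apply, LinearMap.neg_apply, smul_eq_mul, unmetCoord_apply,
    sum_sum_mul_sub_eq (fun l l' => y (fairness l l'))
      (fun l => (lam l)⁻¹ * (Pi.single i 1 : Fin m → ℝ) l)]
  simp [Pi.single_apply, div_eq_mul_inv]
  ring

lemma lagrangian_eq_zero_iff :
    costForm d φ γ + ∑ k, y k • constraintForm lam k = 0 ↔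
      (∀ i j, γ * d i j + y (capacity j) + (y (demandLE i) - y (demandGE i)) + y (eligibility i j)
          = y (flowNonneg i j)) ∧
      ∀ i, (1 - γ) * φ i + (y (demandLE i) - y (demandGE i)) + y (unmetRatio i) / lam i
          + (∑ l, (y (fairness i l) - y (fairness l i))) / lam i = y (unmetNonneg i) := by
  simp only [dual_eq_zero_iff, lagrangian_apply_flow, lagrangian_apply_unmet, sub_eq_zero]

end Lagrangian

def reducedFlowCost (d : Fin m → Fin n → ℝ) (γ : ℝ) (μ : Fin m → ℝ) (π : Fin n → ℝ)
    (σ : Fin m → Fin n → ℝ) (i : Fin m) (j : Fin n) : ℝ :=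
  γ * d i j + π j + μ i + σ i j

noncomputable def reducedUnmetCost (lam φ : Fin m → ℝ) (γ : ℝ) (μ ν : Fin m → ℝ)
    (η τ : Fin m → Fin m → ℝ) (i : Fin m) : ℝ :=
  (1 - γ) * φ i + μ i
    + (1 / lam i) * (∑ l ∈ univ.filter (fun l => i < l), (η i l - τ i l))
    - (1 / lam i) * (∑ l ∈ univ.filter (fun l => l < i), (η l i - τ l i))
    + ν i / lam i

def IsKKT (lam : Fin m → ℝ) (C : Fin n → ℝ) (a d : Fin m → Fin n → ℝ) (φ : Fin m → ℝ)
    (γ θ β : ℝ) (z : Fin n → ℝ) (x : Fin m → Fin n → ℝ) (q : Fin m → ℝ)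
    (μ : Fin m → ℝ) (π : Fin n → ℝ) (σ : Fin m → Fin n → ℝ) (ν : Fin m → ℝ)
    (η τ : Fin m → Fin m → ℝ) : Prop :=
  (∀ j, 0 ≤ π j) ∧ (∀ i j, 0 ≤ σ i j) ∧ (∀ i, 0 ≤ ν i) ∧
  (∀ i i' : Fin m, i < i' → 0 ≤ η i i') ∧ (∀ i i' : Fin m, i < i' → 0 ≤ τ i i') ∧
  (∀ i j, 0 ≤ reducedFlowCost d γ μ π σ i j) ∧
  (∀ i j, reducedFlowCost d γ μ π σ i j * x i j = 0) ∧
  (∀ i, 0 ≤ reducedUnmetCost lam φ γ μ ν η τ i) ∧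
  (∀ i, reducedUnmetCost lam φ γ μ ν η τ i * q i = 0) ∧
  (∀ j, π j * (C j * (1 - z j) - ∑ i, x i j) = 0) ∧
  (∀ i j, σ i j * (C j * a i j - x i j) = 0) ∧
  (∀ i, ν i * (θ - q i / lam i) = 0) ∧
  (∀ i i' : Fin m, i < i' → η i i' * (β - q i / lam i + q i' / lam i') = 0) ∧
  (∀ i i' : Fin m, i < i' → τ i i' * (q i / lam i - q i' / lam i' + β) = 0)

section Multipliers

variable {lam : Fin m → ℝ} {C : Fin n → ℝ} {a d : Fin m → Fin n → ℝ} {φ : Fin m → ℝ}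
  {γ θ β : ℝ} {z : Fin n → ℝ} {x : Fin m → Fin n → ℝ} {q : Fin m → ℝ}

lemma exists_isKKT_of_multipliers {y : Constraint m n → ℝ} (hy : ∀ k, 0 ≤ y k)
    (hslack : ∀ k, y k * (constraintBound lam C a θ β z k - constraintForm lam k (x, q)) = 0)
    (hstat : costForm d φ γ + ∑ k, y k • constraintForm lam k = 0) :
    ∃ μ π σ ν η τ, IsKKT lam C a d φ γ θ β z x q μ π σ ν η τ := by
  rw [lagrangian_eq_zero_iff] at hstat
  obtain ⟨hflow, hunmet⟩ := hstat
  rw [forall_iff] at hy hslack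
  obtain ⟨hy₁, hy₂, hy₃, -, -, hy₆, hy₇, hy₈⟩ := hy
  obtain ⟨hs₁, hs₂, hs₃, -, -, hs₆, hs₇, hs₈⟩ := hslack
  simp only [constraintForm, constraintBound, LinearMap.neg_apply, LinearMap.sub_apply,
    LinearMap.sum_apply, LinearMap.smul_apply, flowCoord_apply, unmetCoord_apply, smul_eq_mul]
    at hs₁ hs₂ hs₃ hs₆ hs₇ hs₈
  have hρ : ∀ i, reducedUnmetCost lam φ γ (fun i => y (demandLE i) - y (demandGE i))
      (fun i => y (unmetRatio i)) (fun i l => y (fairness i l)) (fun i l => y (fairness l i)) i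
      = y (unmetNonneg i) := fun i => by
    rw [← hunmet, sum_sub_swap_eq_sum_gt_sub_sum_lt (fun i l => y (fairness i l)), reducedUnmetCost]
    ring
  refine ⟨fun i => y (demandLE i) - y (demandGE i), fun j => y (capacity j),
    fun i j => y (eligibility i j), fun i => y (unmetRatio i), fun i l => y (fairness i l),
    fun i l => y (fairness l i), fun j => hy₃ j, fun i j => hy₆ i j, fun i => hy₇ i,
    fun i l _ => hy₈ i l, fun i l _ => hy₈ l i, fun i j => ?_, fun i j => ?_, fun i => ?_,
    fun i => ?_, fun j => hs₃ j, fun i j => hs₆ i j, fun i => ?_, fun i l _ => ?_, fun i l _ => ?_⟩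
  · rw [reducedFlowCost, hflow]; exact hy₁ i j
  · rw [reducedFlowCost, hflow]; linear_combination hs₁ i j
  · rw [hρ]; exact hy₂ i
  · rw [hρ]; linear_combination hs₂ i
  · linear_combination hs₇ i
  · linear_combination hs₈ i l
  · linear_combination hs₈ l i

lemma exists_multipliers_of_isKKT {μ : Fin m → ℝ} {π : Fin n → ℝ} {σ : Fin m → Fin n → ℝ}
    {ν : Fin m → ℝ} {η τ : Fin m → Fin m → ℝ} (hdemand : ∀ i, ∑ j, x i j + q i = lam i)
    (h : IsKKT lam C a d φ γ θ β z x q μ π σ ν η τ) :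
    ∃ y : Constraint m n → ℝ, (∀ k, 0 ≤ y k) ∧
      (∀ k, y k * (constraintBound lam C a θ β z k - constraintForm lam k (x, q)) = 0) ∧
      costForm d φ γ + ∑ k, y k • constraintForm lam k = 0 := by
  obtain ⟨hπ, hσ, hν, hη, hτ, hflow, hflowCS, hunmet, hunmetCS, hcap, helig, hratio, hfairη,
    hfairτ⟩ := h
  let ω : Fin m → Fin m → ℝ := fun i l => if i < l then η i l else if l < i then τ l i else 0
  let y : Constraint m n → ℝ := fun
    | flowNonneg i j => reducedFlowCost d γ μ π σ i j
    | unmetNonneg i => reducedUnmetCost lam φ γ μ ν η τ i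
    | capacity j => π j
    | demandLE i => (μ i)⁺
    | demandGE i => (μ i)⁻
    | eligibility i j => σ i j
    | unmetRatio i => ν i
    | fairness i l => ω i l
  have hω : ∀ i, ∑ l, (ω i l - ω l i) =
      ∑ l ∈ univ.filter (fun l => i < l), (η i l - τ i l)
        - ∑ l ∈ univ.filter (fun l => l < i), (η l i - τ l i) := by
    intro i
    rw [sum_sub_swap_eq_sum_gt_sub_sum_lt]
    congr 1 <;> refine Finset.sum_congr rfl fun l hl => ?_ <;>
      have hl := (Finset.mem_filter.mp hl).2 <;> simp [ω, hl, hl.not_gt]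
  refine ⟨y, (forall_iff _).mpr ⟨hflow, hunmet, hπ, fun i => posPart_nonneg _,
      fun i => negPart_nonneg _, hσ, hν, fun i l => ?_⟩,
    (forall_iff _).mpr ⟨?_, ?_, ?_, ?_, ?_, ?_, ?_, ?_⟩,
    (lagrangian_eq_zero_iff d φ γ lam y).mpr ⟨fun i j => ?_, fun i => ?_⟩⟩
  · simp only [y, ω]
    split_ifs with h₁ h₂
    exacts [hη i l h₁, hτ l i h₂, le_rfl]
  all_goals simp only [y, constraintForm, constraintBound, LinearMap.neg_apply, LinearMap.sub_apply,
    LinearMap.add_apply, LinearMap.sum_apply, LinearMap.smul_apply, flowCoord_apply,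
    unmetCoord_apply, smul_eq_mul]
  · exact fun i j => by linear_combination hflowCS i j
  · exact fun i => by linear_combination hunmetCS i
  · exact hcap
  · exact fun i => by simp [hdemand i]
  · exact fun i => by simp [hdemand i]
  · exact helig
  · exact fun i => by linear_combination hratio i
  · intro i l
    simp only [ω]
    split_ifs with h₁ h₂
    · linear_combination hfairη i l h₁
    · linear_combination hfairτ l i h₂
    · simp
  · rw [posPart_sub_negPart]; rfl
  · rw [posPart_sub_negPart, hω, reducedUnmetCost]; ring

end Multipliers

end EdgeAllocation

theorem stmt_8_general
    (m n : ℕ)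
    (lam : Fin m → ℝ)
    (C : Fin n → ℝ)
    (d : Fin m → Fin n → ℝ)
    (φ : Fin m → ℝ)
    (a : Fin m → Fin n → ℝ)
    (γ : ℝ)
    (θ β : ℝ)
    (z : Fin n → ℝ)
    (x : Fin m → Fin n → ℝ) (q : Fin m → ℝ)
    (hxq : (x, q) ∈ Feas lam C a θ β z) :
    (∀ p ∈ Feas lam C a θ β z, cost d φ γ (x, q) ≤ cost d φ γ p) ↔
    ∃ (μ : Fin m → ℝ) (π : Fin n → ℝ) (σ : Fin m → Fin n → ℝ) (ν : Fin m → ℝ)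
      (η τ : Fin m → Fin m → ℝ),
      (∀ j, 0 ≤ π j) ∧ (∀ i j, 0 ≤ σ i j) ∧ (∀ i, 0 ≤ ν i) ∧
      (∀ i i' : Fin m, i < i' → 0 ≤ η i i') ∧ (∀ i i' : Fin m, i < i' → 0 ≤ τ i i') ∧
      (∀ i j, 0 ≤ γ * d i j + π j + μ i + σ i j) ∧
      (∀ i j, (γ * d i j + π j + μ i + σ i j) * x i j = 0) ∧
      (∀ i, 0 ≤ (1 - γ) * φ i + μ i
          + (1 / lam i) * (∑ l ∈ univ.filter (fun l => i < l), (η i l - τ i l))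
          - (1 / lam i) * (∑ l ∈ univ.filter (fun l => l < i), (η l i - τ l i))
          + ν i / lam i) ∧
      (∀ i, ((1 - γ) * φ i + μ i
          + (1 / lam i) * (∑ l ∈ univ.filter (fun l => i < l), (η i l - τ i l))
          - (1 / lam i) * (∑ l ∈ univ.filter (fun l => l < i), (η l i - τ l i))
          + ν i / lam i) * q i = 0) ∧
      (∀ j, π j * (C j * (1 - z j) - ∑ i, x i j) = 0) ∧
      (∀ i j, σ i j * (C j * a i j - x i j) = 0) ∧
      (∀ i, ν i * (θ - q i / lam i) = 0) ∧
      (∀ i i' : Fin m, i < i' → η i i' * (β - q i / lam i + q i' / lam i') = 0) ∧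
      (∀ i i' : Fin m, i < i' → τ i i' * (q i / lam i - q i' / lam i' + β) = 0) := by
  open EdgeAllocation in
  have hx₀ := hxq
  rw [feas_eq] at hx₀
  have hmin : (∀ p ∈ Feas lam C a θ β z, cost d φ γ (x, q) ≤ cost d φ γ p) ↔
      IsMinOn (costForm d φ γ)
        {p | ∀ k, constraintForm lam k p ≤ constraintBound lam C a θ β z k} (x, q) := by
    simp only [isMinOn_iff, ← feas_eq, costForm_apply]
  rw [hmin, isMinOn_iff_exists_kkt _ _ _ hx₀]
  change _ ↔ ∃ μ π σ ν η τ, IsKKT lam C a d φ γ θ β z x q μ π σ ν η τ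
  exact ⟨fun ⟨y, hy, hslack, hstat⟩ => exists_isKKT_of_multipliers hy hslack hstat,
    fun ⟨μ, π, σ, ν, η, τ, h⟩ => exists_multipliers_of_isKKT hxq.2.2.2.1 h⟩

theorem stmt_8
    (m n : ℕ) (hm : 1 ≤ m) (hn : 1 ≤ n)
    (lam : Fin m → ℝ) (hlam : ∀ i, 0 < lam i)
    (C : Fin n → ℝ) (hC : ∀ j, 0 ≤ C j)
    (d : Fin m → Fin n → ℝ) (hd : ∀ i j, 0 ≤ d i j)
    (φ : Fin m → ℝ) (hφ : ∀ i, 0 ≤ φ i)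
    (a : Fin m → Fin n → ℝ) (ha : ∀ i j, a i j = 0 ∨ a i j = 1)
    (γ : ℝ) (hγ0 : 0 ≤ γ) (hγ1 : γ ≤ 1)
    (θ β : ℝ) (hθ : 0 ≤ θ) (hβ : 0 ≤ β)
    (z : Fin n → ℝ) (hz : ∀ j, z j = 0 ∨ z j = 1)
    (x : Fin m → Fin n → ℝ) (q : Fin m → ℝ)
    (hxq : (x, q) ∈ Feas lam C a θ β z) :
    (∀ p ∈ Feas lam C a θ β z, cost d φ γ (x, q) ≤ cost d φ γ p) ↔
    ∃ (μ : Fin m → ℝ) (π : Fin n → ℝ) (σ : Fin m → Fin n → ℝ) (ν : Fin m → ℝ)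
      (η τ : Fin m → Fin m → ℝ),
      (∀ j, 0 ≤ π j) ∧ (∀ i j, 0 ≤ σ i j) ∧ (∀ i, 0 ≤ ν i) ∧
      (∀ i i' : Fin m, i < i' → 0 ≤ η i i') ∧ (∀ i i' : Fin m, i < i' → 0 ≤ τ i i') ∧
      (∀ i j, 0 ≤ γ * d i j + π j + μ i + σ i j) ∧
      (∀ i j, (γ * d i j + π j + μ i + σ i j) * x i j = 0) ∧
      (∀ i, 0 ≤ (1 - γ) * φ i + μ i
          + (1 / lam i) * (∑ l ∈ univ.filter (fun l => i < l), (η i l - τ i l))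
          - (1 / lam i) * (∑ l ∈ univ.filter (fun l => l < i), (η l i - τ l i))
          + ν i / lam i) ∧
      (∀ i, ((1 - γ) * φ i + μ i
          + (1 / lam i) * (∑ l ∈ univ.filter (fun l => i < l), (η i l - τ i l))
          - (1 / lam i) * (∑ l ∈ univ.filter (fun l => l < i), (η l i - τ l i))
          + ν i / lam i) * q i = 0) ∧
      (∀ j, π j * (C j * (1 - z j) - ∑ i, x i j) = 0) ∧
      (∀ i j, σ i j * (C j * a i j - x i j) = 0) ∧
      (∀ i, ν i * (θ - q i / lam i) = 0) ∧
      (∀ i i' : Fin m, i < i' → η i i' * (β - q i / lam i + q i' / lam i') = 0) ∧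
      (∀ i i' : Fin m, i < i' → τ i i' * (q i / lam i - q i' / lam i' + β) = 0) :=
  stmt_8_general m n lam C d φ a γ θ β z x q hxq
end

section
/- Equivalence of the max-min attacker–defender problem and the single-level MILP: let K ∈ ℕ and Z = { z : J → ℝ : z j ∈ {0,1} for all j and ∑_j z j ≤ K }, and fix big-M constants M : J → ℝ. Assume that for every z ∈ Z the set S(z) is nonempty and there exists a dual-feasible tuple maximizing D_z whose π-component satisfies π j ≤ M j for all j. Then sup over z ∈ Z of (minimum of f over S(z)) equals the supremum, over all (z, g, π, μ, σ, η, τ, ν) with z ∈ Z, (π, μ, σ, η, τ, ν) dual-feasible, and g : J → ℝ satisfying g j ≤ M j * (1 − z j), g j ≤ π j, g j ≥ 0, and g j ≥ π j − M j * z j for all j, of the MILP objective −∑_j C j * g j + ∑_i λ i * μ i − ∑_{i,j} C j * a i j * σ i j − β * ∑_{i < i'} (η i i' + τ i i') − θ * ∑_i ν i; moreover both suprema are attained. -/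
open Finset

variable {m n : ℕ}

/-
For a fixed attack `z` the defender's problem is a linear program, and `DualFeasible`/`Dobj` are
exactly its LP dual. Weak duality is a Lagrangian estimate; strong duality comes from Farkas'
lemma, proved algebraically by Fourier–Motzkin elimination (induction on the number of
generators). So the inner minimum equals the optimal dual value `Dobj z t*` granted by the
hypothesis. The outer maximum is attained since the set of admissible attacks is finite, and for
binary `z` with `0 ≤ π ≤ M` the big-M constraints say precisely `g = (1 - z) π`, which turns the
MILP objective into `Dobj z`.
-/

lemma Finset.sum_insert_update_smul {ι R M : Type*} [DecidableEq ι] [Semiring R] [AddCommMonoid M]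
    [Module R M] {s : Finset ι} {h : ι} (hhs : h ∉ s) (c : ι → R) (t : R) (g : ι → M) :
    ∑ i ∈ insert h s, Function.update c h t i • g i = t • g h + ∑ i ∈ s, c i • g i := by
  rw [sum_insert hhs, Function.update_self]
  exact congrArg _ <| sum_congr rfl fun i hi => by
    rw [Function.update_of_ne (ne_of_mem_of_not_mem hi hhs)]

lemma Function.update_nonneg {ι R : Type*} [DecidableEq ι] [Zero R] [LE R] {c : ι → R}
    (hc : ∀ i, 0 ≤ c i) {t : R} (ht : 0 ≤ t) (h i : ι) : 0 ≤ Function.update c h t i := by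
  rcases eq_or_ne i h with rfl | hi
  · simpa using ht
  · simpa [hi] using hc i

section Farkas

variable {𝕜 W ι : Type*} [Field 𝕜] [LinearOrder 𝕜] [IsStrictOrderedRing 𝕜]
  [AddCommGroup W] [Module 𝕜 W] [DecidableEq ι]

/-- The lifting step of the Fourier–Motzkin induction in `exists_nonneg_sum_eq_or_exists_neg`. -/
lemma Module.Dual.exists_nonneg_sum_insert_eq {s : Finset ι} {h : ι} (hhs : h ∉ s)
    {g : ι → Module.Dual 𝕜 W} {g₀ : Module.Dual 𝕜 W} {w : W} (hw : ∀ i ∈ s, 0 ≤ g i w)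
    (hw₀ : g₀ w < 0) (hhw : g h w < 0) {c : ι → 𝕜} (hc : ∀ i, 0 ≤ c i)
    (hsum : ∑ i ∈ s, c i • (g h w • g i - g i w • g h) = g h w • g₀ - g₀ w • g h) :
    ∃ c' : ι → 𝕜, (∀ i, 0 ≤ c' i) ∧ ∑ i ∈ insert h s, c' i • g i = g₀ := by
  set t := (g₀ w - ∑ i ∈ s, c i * g i w) / g h w
  have ht : 0 ≤ t := div_nonneg_of_nonpos
    (by linarith [sum_nonneg fun i hi => mul_nonneg (hc i) (hw i hi)]) hhw.le
  refine ⟨Function.update c h t, Function.update_nonneg hc ht h, ?_⟩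
  rw [sum_insert_update_smul hhs]
  ext u
  have key := LinearMap.congr_fun hsum u
  simp only [LinearMap.sum_apply, LinearMap.smul_apply, LinearMap.sub_apply, LinearMap.add_apply,
    smul_eq_mul] at key ⊢
  have hs : ∑ i ∈ s, c i * (g h w * g i u - g i w * g h u)
      = g h w * ∑ i ∈ s, c i * g i u - (∑ i ∈ s, c i * g i w) * g h u := by
    rw [mul_sum, sum_mul, ← sum_sub_distrib]; exact sum_congr rfl fun i _ => by ring
  rw [hs] at key
  simp only [t]
  field_simp [hhw.ne]
  linear_combination key

theorem Module.Dual.exists_nonneg_sum_eq_or_exists_neg (s : Finset ι) (g : ι → Module.Dual 𝕜 W)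
    (g₀ : Module.Dual 𝕜 W) :
    (∃ c : ι → 𝕜, (∀ i, 0 ≤ c i) ∧ ∑ i ∈ s, c i • g i = g₀) ∨
      ∃ w, (∀ i ∈ s, 0 ≤ g i w) ∧ g₀ w < 0 := by
  induction s using Finset.induction_on generalizing g g₀ with
  | empty =>
    by_cases h₀ : g₀ = 0
    · exact .inl ⟨0, fun _ => le_rfl, by simp [h₀]⟩
    obtain ⟨w, hw⟩ := DFunLike.ne_iff.mp h₀
    rcases (show g₀ w ≠ 0 by simpa using hw).lt_or_gt with hneg | hpos
    · exact .inr ⟨w, by simp, hneg⟩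
    · exact .inr ⟨-w, by simp, by simpa using hpos⟩
  | insert h s hhs ih =>
    rcases ih g g₀ with ⟨c, hc, hsum⟩ | ⟨w, hw, hw₀⟩
    · exact .inl ⟨Function.update c h 0, Function.update_nonneg hc le_rfl h,
        by rw [sum_insert_update_smul hhs, zero_smul, zero_add, hsum]⟩
    by_cases hhw : 0 ≤ g h w
    · exact .inr ⟨w, forall_mem_insert _ _ _ |>.2 ⟨hhw, hw⟩, hw₀⟩
    push Not at hhw
    -- Fourier–Motzkin step: eliminate `g h` by projecting everything along `w`.
    rcases ih (fun i => g h w • g i - g i w • g h) (g h w • g₀ - g₀ w • g h) with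
      ⟨c, hc, hsum⟩ | ⟨w', hw', hw₀'⟩
    · exact .inl (exists_nonneg_sum_insert_eq hhs hw hw₀ hhw hc hsum)
    refine .inr ⟨g h w • w' - g h w' • w, forall_mem_insert _ _ _ |>.2 ⟨?_, fun i hi => ?_⟩, ?_⟩
    · simp [mul_comm]
    · simpa [mul_comm] using hw' i hi
    · simpa [mul_comm] using hw₀'

lemma Module.Dual.mul_le_of_forall_le_mul {V κ : Type*} [AddCommGroup V] [Module 𝕜 V]
    {ℓ : κ → Module.Dual 𝕜 V} {b : κ → 𝕜} {c : Module.Dual 𝕜 V} {p : 𝕜}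
    (hfeas : ∃ u, ∀ k, ℓ k u ≤ b k) (hp : ∀ u, (∀ k, ℓ k u ≤ b k) → p ≤ c u) {u : V} {t : 𝕜}
    (ht : 0 ≤ t) (hu : ∀ k, ℓ k u ≤ b k * t) : p * t ≤ c u := by
  rcases ht.lt_or_eq with ht | rfl
  · have := hp (t⁻¹ • u) fun k => by
      rw [map_smul, smul_eq_mul, inv_mul_le_iff₀ ht]; linarith [hu k]
    rwa [map_smul, smul_eq_mul, le_inv_mul_iff₀ ht, mul_comm] at this
  obtain ⟨u₀, hu₀⟩ := hfeas
  by_contra! hcu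
  rw [mul_zero] at hcu
  -- `u` is a recession direction along which `c` decreases without bound.
  set s := (c u₀ - p + 1) / -c u
  have hs : 0 ≤ s := div_nonneg (by linarith [hp u₀ hu₀]) (by linarith)
  have hsc : s * c u = -(c u₀ - p + 1) := by
    simp only [s]; field_simp [hcu.ne]
  have := hp (u₀ + s • u) fun k => by
    simp only [map_add, map_smul, smul_eq_mul]; nlinarith [hu k, hu₀ k]
  simp only [map_add, map_smul, smul_eq_mul] at this
  linarith

theorem Module.Dual.exists_multipliers_of_forall_le {V κ : Type*} [AddCommGroup V] [Module 𝕜 V]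
    [Fintype κ] (ℓ : κ → Module.Dual 𝕜 V) (b : κ → 𝕜) (c : Module.Dual 𝕜 V) (p : 𝕜)
    (hfeas : ∃ u, ∀ k, ℓ k u ≤ b k) (hp : ∀ u, (∀ k, ℓ k u ≤ b k) → p ≤ c u) :
    ∃ y : κ → 𝕜, (∀ k, 0 ≤ y k) ∧ (∀ u, c u + ∑ k, y k * ℓ k u = 0) ∧
      p ≤ -∑ k, y k * b k := by
  classical
  -- Homogenize: `(u, t)` with `t > 0` stands for the point `t⁻¹ • u`.
  let g : Option κ → Module.Dual 𝕜 (V × 𝕜) := fun o =>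
    o.elim (LinearMap.snd 𝕜 V 𝕜) fun k => b k • LinearMap.snd 𝕜 V 𝕜 - ℓ k ∘ₗ LinearMap.fst 𝕜 V 𝕜
  rcases Module.Dual.exists_nonneg_sum_eq_or_exists_neg univ g
      (c ∘ₗ LinearMap.fst 𝕜 V 𝕜 - p • LinearMap.snd 𝕜 V 𝕜) with
    ⟨y, hy, hsum⟩ | ⟨⟨u, t⟩, hw, hneg⟩
  · refine ⟨fun k => y (some k), fun k => hy _, fun u => ?_, ?_⟩
    · have h : -∑ k, y (some k) * ℓ k u = c u := by
        simpa [g, Fintype.sum_option] using LinearMap.congr_fun hsum (u, 0)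
      linear_combination -h
    · have h : y none + ∑ k, y (some k) * b k = -p := by
        simpa [g, Fintype.sum_option] using LinearMap.congr_fun hsum (0, 1)
      linarith [hy none]
  have ht : 0 ≤ t := by simpa [g] using hw none (mem_univ _)
  have hu : ∀ k, ℓ k u ≤ b k * t := fun k => by simpa [g] using hw (some k) (mem_univ _)
  have hneg : c u < p * t := by simpa [sub_neg] using hneg
  exact absurd (mul_le_of_forall_le_mul hfeas hp ht hu) hneg.not_ge

end Farkas

section PairSums

variable {α : Type*} [Fintype α] [LinearOrder α]

lemma sum_filter_gt_add_sum_filter_lt_add {M : Type*} [AddCommMonoid M] (f : α → M) (i : α) :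
    ∑ l ∈ univ.filter (fun l => i < l), f l + ∑ l ∈ univ.filter (fun l => l < i), f l + f i =
      ∑ l, f l := by
  rw [sum_filter, sum_filter, ← Fintype.sum_ite_eq' i f, ← sum_add_distrib, ← sum_add_distrib]
  refine sum_congr rfl fun l _ => ?_
  rcases lt_trichotomy i l with h | rfl | h
  · simp [h, h.not_gt, h.ne']
  · simp
  · simp [h, h.not_gt, h.ne]

lemma sum_sum_filter_lt_comm {M : Type*} [AddCommMonoid M] (f : α → α → M) :
    ∑ i, ∑ l ∈ univ.filter (fun l => i < l), f i l =
      ∑ l, ∑ i ∈ univ.filter (fun i => i < l), f i l :=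
  sum_comm' fun _ _ => by simp

lemma sum_sum_filter_lt_add_swap_add_diag {M : Type*} [AddCommMonoid M] (w : α → α → M) :
    ∑ i, ∑ l ∈ univ.filter (fun l => i < l), (w i l + w l i) + ∑ i, w i i = ∑ i, ∑ l, w i l := by
  simp only [sum_add_distrib]
  rw [sum_sum_filter_lt_comm (fun i l => w l i), ← sum_add_distrib, ← sum_add_distrib]
  exact sum_congr rfl fun i _ => sum_filter_gt_add_sum_filter_lt_add (w i) i

lemma sum_filter_gt_sub_swap_sub_sum_filter_lt {M : Type*} [AddCommGroup M] (w : α → α → M)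
    (i : α) :
    ∑ l ∈ univ.filter (fun l => i < l), (w i l - w l i) -
      ∑ l ∈ univ.filter (fun l => l < i), (w l i - w i l) = ∑ l, w i l - ∑ l, w l i := by
  rw [← sum_sub_distrib, ← sum_filter_gt_add_sum_filter_lt_add _ i, sub_self, add_zero,
    sub_eq_add_neg, ← sum_neg_distrib]
  simp only [neg_sub]

lemma sum_sum_filter_lt_mul_sub {R : Type*} [CommRing R] (w : α → α → R) (Q : α → R) :
    ∑ i, ∑ l ∈ univ.filter (fun l => i < l), w i l * (Q i - Q l) =
      ∑ i, (∑ l ∈ univ.filter (fun l => i < l), w i l -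
        ∑ l ∈ univ.filter (fun l => l < i), w l i) * Q i := by
  simp only [mul_sub, sum_sub_distrib, sub_mul, sum_mul]
  rw [sum_sum_filter_lt_comm (fun i l => w i l * Q l)]

lemma sum_sum_filter_lt_mul_sub_le {R : Type*} [CommRing R] [LinearOrder R] [IsOrderedRing R]
    {η τ : α → α → R} (hη : ∀ i l, i < l → 0 ≤ η i l) (hτ : ∀ i l, i < l → 0 ≤ τ i l)
    {Q : α → R} {β : R} (hQ : ∀ i l, |Q i - Q l| ≤ β) :
    ∑ i, ∑ l ∈ univ.filter (fun l => i < l), (η i l - τ i l) * (Q i - Q l) ≤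
      β * ∑ i, ∑ l ∈ univ.filter (fun l => i < l), (η i l + τ i l) := by
  simp only [mul_sum]
  refine sum_le_sum fun i _ => sum_le_sum fun l hl => ?_
  have hil : i < l := (mem_filter.1 hl).2
  obtain ⟨hle, hge⟩ := abs_sub_le_iff.1 (hQ i l)
  calc (η i l - τ i l) * (Q i - Q l) = η i l * (Q i - Q l) + τ i l * (Q l - Q i) := by ring
    _ ≤ η i l * β + τ i l * β := add_le_add (mul_le_mul_of_nonneg_left hle (hη i l hil))
        (mul_le_mul_of_nonneg_left hge (hτ i l hil))
    _ = β * (η i l + τ i l) := by ring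

end PairSums

abbrev Allocation (m n : ℕ) := (Fin m → Fin n → ℝ) × (Fin m → ℝ)

abbrev ConstraintIdx (m n : ℕ) :=
  (Fin m × Fin n) ⊕ Fin m ⊕ Fin n ⊕ Fin m ⊕ Fin m ⊕ (Fin m × Fin n) ⊕ Fin m ⊕ (Fin m × Fin m)

namespace ConstraintIdx

abbrev flowNonneg (i : Fin m) (j : Fin n) : ConstraintIdx m n := .inl (i, j)
abbrev unmetNonneg (i : Fin m) : ConstraintIdx m n := .inr (.inl i)
abbrev capacity (j : Fin n) : ConstraintIdx m n := .inr (.inr (.inl j))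
abbrev demandLe (i : Fin m) : ConstraintIdx m n := .inr (.inr (.inr (.inl i)))
abbrev demandGe (i : Fin m) : ConstraintIdx m n := .inr (.inr (.inr (.inr (.inl i))))
abbrev eligibility (i : Fin m) (j : Fin n) : ConstraintIdx m n :=
  .inr (.inr (.inr (.inr (.inr (.inl (i, j))))))
abbrev threshold (i : Fin m) : ConstraintIdx m n := .inr (.inr (.inr (.inr (.inr (.inr (.inl i))))))
abbrev fairness (i l : Fin m) : ConstraintIdx m n :=
  .inr (.inr (.inr (.inr (.inr (.inr (.inr (i, l)))))))

end ConstraintIdx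

def flowCoord (i : Fin m) (j : Fin n) : Module.Dual ℝ (Allocation m n) :=
  LinearMap.proj j ∘ₗ LinearMap.proj i ∘ₗ LinearMap.fst ℝ _ _

def unmetCoord (i : Fin m) : Module.Dual ℝ (Allocation m n) :=
  LinearMap.proj i ∘ₗ LinearMap.snd ℝ _ _

@[simp] lemma flowCoord_apply (i : Fin m) (j : Fin n) (p : Allocation m n) :
    flowCoord i j p = p.1 i j :=
  rfl

@[simp] lemma unmetCoord_apply (i : Fin m) (p : Allocation m n) : unmetCoord i p = p.2 i := rfl

def costFunctional (d : Fin m → Fin n → ℝ) (φ : Fin m → ℝ) (γ : ℝ) : Module.Dual ℝ (Allocation m n) :=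
  (1 - γ) • ∑ i, φ i • unmetCoord i + γ • ∑ i, ∑ j, d i j • flowCoord i j

@[simp] lemma costFunctional_apply (d : Fin m → Fin n → ℝ) (φ : Fin m → ℝ) (γ : ℝ) (p : Allocation m n) :
    costFunctional d φ γ p = cost d φ γ p := by
  simp [costFunctional, cost]

/-- The fairness constraint is imposed on every ordered pair, which encodes the absolute value. -/
noncomputable def constraintMap (lam : Fin m → ℝ) :
    ConstraintIdx m n → Module.Dual ℝ (Allocation m n) :=
  Sum.elim (fun ij => -flowCoord ij.1 ij.2) <| Sum.elim (fun i => -unmetCoord i) <|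
  Sum.elim (fun j => ∑ i, flowCoord i j) <| Sum.elim (fun i => ∑ j, flowCoord i j + unmetCoord i) <|
  Sum.elim (fun i => -(∑ j, flowCoord i j + unmetCoord i)) <|
  Sum.elim (fun ij => flowCoord ij.1 ij.2) <| Sum.elim (fun i => (lam i)⁻¹ • unmetCoord i)
    fun il => (lam il.1)⁻¹ • unmetCoord il.1 - (lam il.2)⁻¹ • unmetCoord il.2

def constraintBound (lam : Fin m → ℝ) (C : Fin n → ℝ) (a : Fin m → Fin n → ℝ) (θ β : ℝ)
    (z : Fin n → ℝ) : ConstraintIdx m n → ℝ :=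
  Sum.elim 0 <| Sum.elim 0 <| Sum.elim (fun j => C j * (1 - z j)) <| Sum.elim lam <|
  Sum.elim (-lam) <| Sum.elim (fun ij => C ij.2 * a ij.1 ij.2) <| Sum.elim (fun _ => θ) fun _ => β

section LinearProgram

variable {lam : Fin m → ℝ} {C : Fin n → ℝ} {d : Fin m → Fin n → ℝ} {φ : Fin m → ℝ}
  {a : Fin m → Fin n → ℝ} {γ θ β : ℝ} {z : Fin n → ℝ}

theorem mem_Feas_iff_forall_constraint {p : Allocation m n} :
    p ∈ Feas lam C a θ β z ↔ ∀ k, constraintMap lam k p ≤ constraintBound lam C a θ β z k := by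
  simp only [Feas, Set.mem_ofPred_eq, Sum.forall, Prod.forall, constraintMap, constraintBound,
    Sum.elim_inl, Sum.elim_inr, LinearMap.neg_apply, flowCoord_apply, unmetCoord_apply,
    neg_nonpos, Pi.zero_apply, LinearMap.sum_apply, LinearMap.add_apply, Pi.neg_apply,
    neg_le_neg_iff, LinearMap.smul_apply, LinearMap.sub_apply, smul_eq_mul, ← div_eq_inv_mul,
    and_congr_right_iff]
  intro _ _ _
  refine ⟨fun ⟨hdem, hel, hth, hfair⟩ => ⟨fun i => (hdem i).le, fun i => (hdem i).ge, hel, hth,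
    fun i l => (abs_sub_le_iff.1 (hfair i l)).1⟩, fun ⟨hle, hge, hel, hth, hfair⟩ =>
    ⟨fun i => le_antisymm (hle i) (hge i), hel, hth,
      fun i l => abs_sub_le_iff.2 ⟨hfair i l, hfair l i⟩⟩⟩

theorem Dobj_le_cost {π : Fin n → ℝ} {μ : Fin m → ℝ} {σ : Fin m → Fin n → ℝ}
    {η τ : Fin m → Fin m → ℝ} {ν : Fin m → ℝ} (ht : DualFeasible lam d φ γ π μ σ η τ ν)
    {p : Allocation m n} (hp : p ∈ Feas lam C a θ β z) :
    Dobj lam C a θ β z π μ σ η τ ν ≤ cost d φ γ p := by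
  obtain ⟨hπ, hσ, hν, hη, hτ, hdx, hdq⟩ := ht
  obtain ⟨hx, hq, hcap, hdem, helig, hthr, hfair⟩ := hp
  set x := p.1
  set q := p.2
  set Q := fun i => q i / lam i
  have hcost : cost d φ γ p = ∑ i, ∑ j, γ * d i j * x i j + ∑ i, (1 - γ) * φ i * q i := by
    simp only [cost, mul_sum, mul_assoc]; ring
  have hflow : ∑ i, ∑ j, (-π j + μ i - σ i j) * x i j ≤ ∑ i, ∑ j, γ * d i j * x i j :=
    sum_le_sum fun i _ => sum_le_sum fun j _ => mul_le_mul_of_nonneg_right (hdx i j) (hx i j)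
  have hunmet : ∑ i, (μ i - (1 / lam i) * (∑ l ∈ univ.filter (fun l => i < l), (η i l - τ i l))
      + (1 / lam i) * (∑ l ∈ univ.filter (fun l => l < i), (η l i - τ l i))
      - ν i / lam i) * q i ≤ ∑ i, (1 - γ) * φ i * q i :=
    sum_le_sum fun i _ => mul_le_mul_of_nonneg_right (hdq i) (hq i)
  have hflow_eq : ∑ i, ∑ j, (-π j + μ i - σ i j) * x i j =
      -∑ j, π j * ∑ i, x i j + ∑ i, μ i * ∑ j, x i j - ∑ i, ∑ j, σ i j * x i j := by
    simp only [add_mul, sub_mul, neg_mul, sum_add_distrib, sum_sub_distrib, sum_neg_distrib,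
      mul_sum]
    rw [sum_comm (f := fun i j => π j * x i j)]
  have hunmet_eq : ∑ i, (μ i - (1 / lam i) * (∑ l ∈ univ.filter (fun l => i < l), (η i l - τ i l))
      + (1 / lam i) * (∑ l ∈ univ.filter (fun l => l < i), (η l i - τ l i))
      - ν i / lam i) * q i = ∑ i, μ i * q i
        - ∑ i, ∑ l ∈ univ.filter (fun l => i < l), (η i l - τ i l) * (Q i - Q l)
        - ∑ i, ν i * Q i := by
    rw [sum_sum_filter_lt_mul_sub, ← sum_sub_distrib, ← sum_sub_distrib]
    exact sum_congr rfl fun i _ => by simp only [Q]; ring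
  have hcap' : ∑ j, π j * ∑ i, x i j ≤ ∑ j, C j * (1 - z j) * π j :=
    sum_le_sum fun j _ => by rw [mul_comm]; exact mul_le_mul_of_nonneg_right (hcap j) (hπ j)
  have hdem' : ∑ i, μ i * ∑ j, x i j + ∑ i, μ i * q i = ∑ i, lam i * μ i := by
    rw [← sum_add_distrib]; exact sum_congr rfl fun i _ => by rw [← hdem i]; ring
  have helig' : ∑ i, ∑ j, σ i j * x i j ≤ ∑ i, ∑ j, C j * a i j * σ i j :=
    sum_le_sum fun i _ => sum_le_sum fun j _ => by
      rw [mul_comm]; exact mul_le_mul_of_nonneg_right (helig i j) (hσ i j)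
  have hfair' := sum_sum_filter_lt_mul_sub_le hη hτ hfair
  have hthr' : ∑ i, ν i * Q i ≤ θ * ∑ i, ν i := by
    rw [mul_sum]
    exact sum_le_sum fun i _ => by rw [mul_comm θ]; exact mul_le_mul_of_nonneg_left (hthr i) (hν i)
  rw [hcost]
  unfold Dobj
  linarith

theorem Dobj_le_sInf_cost {π : Fin n → ℝ} {μ : Fin m → ℝ} {σ : Fin m → Fin n → ℝ}
    {η τ : Fin m → Fin m → ℝ} {ν : Fin m → ℝ} (hne : (Feas lam C a θ β z).Nonempty)
    (ht : DualFeasible lam d φ γ π μ σ η τ ν) :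
    Dobj lam C a θ β z π μ σ η τ ν ≤ sInf (cost d φ γ '' Feas lam C a θ β z) :=
  le_csInf (hne.image _) <| by rintro _ ⟨p, hp, rfl⟩; exact Dobj_le_cost ht hp

lemma cost_single_flow (i : Fin m) (j : Fin n) :
    cost d φ γ (Pi.single i (Pi.single j 1), 0) = γ * d i j := by
  simp [cost, Pi.single_apply, ite_apply]

lemma cost_single_unmet (i : Fin m) :
    cost d φ γ ((0 : Fin m → Fin n → ℝ), Pi.single i 1) = (1 - γ) * φ i := by
  simp [cost, Pi.single_apply]

lemma sum_mul_constraintMap_single_flow (y : ConstraintIdx m n → ℝ) (i : Fin m) (j : Fin n) :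
    ∑ k, y k * constraintMap lam k (Pi.single i (Pi.single j 1), 0) =
      -y (.flowNonneg i j) + y (.capacity j) + y (.demandLe i) - y (.demandGe i) +
        y (.eligibility i j) := by
  simp only [constraintMap, neg_add_rev, Fintype.sum_sum_type, Sum.elim_inl, LinearMap.neg_apply,
    flowCoord_apply, Pi.single_apply, ite_apply, Pi.zero_apply, mul_neg, mul_ite, mul_one, mul_zero,
    sum_neg_distrib, Fintype.sum_prod_type, sum_ite_irrel, sum_ite_eq', mem_univ, if_true,
    sum_const_zero, Sum.elim_inr, unmetCoord_apply, neg_zero, LinearMap.sum_apply,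
    LinearMap.add_apply, add_zero, zero_add, LinearMap.smul_apply, smul_eq_mul, LinearMap.sub_apply,
    sub_self]
  ring

lemma sum_mul_constraintMap_single_unmet (y : ConstraintIdx m n → ℝ) (i : Fin m) :
    ∑ k, y k * constraintMap lam k ((0 : Fin m → Fin n → ℝ), Pi.single i 1) =
      -y (.unmetNonneg i) + y (.demandLe i) - y (.demandGe i) +
        (lam i)⁻¹ * (y (.threshold i) + ∑ l, y (.fairness i l) - ∑ l, y (.fairness l i)) := by
  simp only [constraintMap, neg_add_rev, Fintype.sum_sum_type, Sum.elim_inl, LinearMap.neg_apply,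
    flowCoord_apply, Pi.zero_apply, neg_zero, mul_zero, sum_const_zero, Sum.elim_inr,
    unmetCoord_apply, Pi.single_apply, mul_neg, mul_ite, mul_one, sum_neg_distrib, sum_ite_eq',
    mem_univ, if_true, LinearMap.sum_apply, LinearMap.add_apply, zero_add, add_zero,
    LinearMap.smul_apply, smul_eq_mul, LinearMap.sub_apply, mul_sub, sum_sub_distrib,
    Fintype.sum_prod_type, sum_ite_irrel, ← sum_mul]
  ring

lemma sum_mul_constraintBound (y : ConstraintIdx m n → ℝ) :
    ∑ k, y k * constraintBound lam C a θ β z k =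
      ∑ j, C j * (1 - z j) * y (.capacity j) + ∑ i, lam i * (y (.demandLe i) - y (.demandGe i)) +
        ∑ i, ∑ j, C j * a i j * y (.eligibility i j) + θ * ∑ i, y (.threshold i) +
        β * ∑ i, ∑ l, y (.fairness i l) := by
  simp only [Fintype.sum_sum_type, Fintype.sum_prod_type, constraintBound, Sum.elim_inl,
    Sum.elim_inr, Pi.zero_apply, Pi.neg_apply, mul_zero, mul_neg, sum_const_zero, mul_sub,
    sub_mul, sum_sub_distrib, sum_neg_distrib, mul_sum]
  simp only [mul_comm, mul_assoc]
  ring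

theorem exists_dualFeasible_of_multipliers (hβ : 0 ≤ β) (y : ConstraintIdx m n → ℝ)
    (hy : ∀ k, 0 ≤ y k) (hy_eq : ∀ u, costFunctional d φ γ u + ∑ k, y k * constraintMap lam k u = 0) :
    ∃ π μ σ η τ ν, DualFeasible lam d φ γ π μ σ η τ ν ∧
      -∑ k, y k * constraintBound lam C a θ β z k ≤ Dobj lam C a θ β z π μ σ η τ ν := by
  -- Only pairs `i < l` enter the dual: the multiplier of `(l, i)` becomes `τ i l`.
  refine ⟨fun j => y (.capacity j), fun i => y (.demandGe i) - y (.demandLe i),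
    fun i j => y (.eligibility i j), fun i l => y (.fairness i l), fun i l => y (.fairness l i),
    fun i => y (.threshold i), ⟨fun _ => hy _, fun _ _ => hy _, fun _ => hy _, fun _ _ _ => hy _,
    fun _ _ _ => hy _, fun i j => ?_, fun i => ?_⟩, ?_⟩
  · have h := hy_eq (Pi.single i (Pi.single j 1), 0)
    rw [costFunctional_apply, cost_single_flow, sum_mul_constraintMap_single_flow] at h
    linarith [hy (.flowNonneg i j)]
  · have h := hy_eq (0, Pi.single i 1)
    rw [costFunctional_apply, cost_single_unmet, sum_mul_constraintMap_single_unmet] at h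
    have hpairs := congrArg ((lam i)⁻¹ * ·)
      (sum_filter_gt_sub_swap_sub_sum_filter_lt (fun i l => y (.fairness i l)) i)
    simp only [mul_sub] at hpairs h
    simp only [div_eq_inv_mul]
    linarith [hy (.unmetNonneg i)]
  · have hdiag : 0 ≤ ∑ i, y (.fairness i i) := sum_nonneg fun i _ => hy _
    have hpairs := sum_sum_filter_lt_add_swap_add_diag (fun i l => y (.fairness i l))
    have hfair := mul_le_mul_of_nonneg_left (show ∑ i, ∑ l ∈ univ.filter (fun l => i < l),
      (y (.fairness i l) + y (.fairness l i)) ≤ ∑ i, ∑ l, y (.fairness i l) by linarith) hβ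
    rw [sum_mul_constraintBound]
    simp only [Dobj, mul_sub, sum_sub_distrib]
    linarith

theorem exists_dualFeasible_le_Dobj (hβ : 0 ≤ β) (hne : (Feas lam C a θ β z).Nonempty) {v : ℝ}
    (hv : ∀ p ∈ Feas lam C a θ β z, v ≤ cost d φ γ p) :
    ∃ π μ σ η τ ν, DualFeasible lam d φ γ π μ σ η τ ν ∧ v ≤ Dobj lam C a θ β z π μ σ η τ ν := by
  obtain ⟨p, hp⟩ := hne
  obtain ⟨y, hy, hy_eq, hvy⟩ := Module.Dual.exists_multipliers_of_forall_le (constraintMap lam)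
    (constraintBound lam C a θ β z) (costFunctional d φ γ) v ⟨p, mem_Feas_iff_forall_constraint.1 hp⟩
    fun u hu => by simpa using hv u (mem_Feas_iff_forall_constraint.2 hu)
  obtain ⟨π, μ, σ, η, τ, ν, ht, hle⟩ := exists_dualFeasible_of_multipliers hβ y hy hy_eq
  exact ⟨π, μ, σ, η, τ, ν, ht, hvy.trans hle⟩

theorem sInf_cost_eq_Dobj (hβ : 0 ≤ β) (hne : (Feas lam C a θ β z).Nonempty) {π : Fin n → ℝ}
    {μ : Fin m → ℝ} {σ : Fin m → Fin n → ℝ} {η τ : Fin m → Fin m → ℝ} {ν : Fin m → ℝ}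
    (ht : DualFeasible lam d φ γ π μ σ η τ ν)
    (hopt : ∀ π' μ' σ' η' τ' ν', DualFeasible lam d φ γ π' μ' σ' η' τ' ν' →
      Dobj lam C a θ β z π' μ' σ' η' τ' ν' ≤ Dobj lam C a θ β z π μ σ η τ ν) :
    sInf (cost d φ γ '' Feas lam C a θ β z) = Dobj lam C a θ β z π μ σ η τ ν := by
  refine le_antisymm ?_ (Dobj_le_sInf_cost hne ht)
  have hbdd : BddBelow (cost d φ γ '' Feas lam C a θ β z) :=
    ⟨_, by rintro _ ⟨p, hp, rfl⟩; exact Dobj_le_cost ht hp⟩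
  obtain ⟨π', μ', σ', η', τ', ν', ht', hle⟩ := exists_dualFeasible_le_Dobj hβ hne
    fun p hp => csInf_le hbdd ⟨p, hp, rfl⟩
  exact hle.trans (hopt π' μ' σ' η' τ' ν' ht')

end LinearProgram

lemma eq_one_sub_mul_of_bigM {z π g M : ℝ} (hz : z = 0 ∨ z = 1)
    (h : g ≤ M * (1 - z) ∧ g ≤ π ∧ 0 ≤ g ∧ π - M * z ≤ g) : g = (1 - z) * π := by
  rcases hz with rfl | rfl <;> simp only [mul_zero, sub_zero, mul_one, sub_self] at h ⊢ <;>
    linarith [h.1, h.2.1, h.2.2.1, h.2.2.2]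

lemma bigM_of_nonneg_of_le {z π M : ℝ} (hz : z = 0 ∨ z = 1) (hπ : 0 ≤ π) (hπM : π ≤ M) :
    (1 - z) * π ≤ M * (1 - z) ∧ (1 - z) * π ≤ π ∧ 0 ≤ (1 - z) * π ∧
      π - M * z ≤ (1 - z) * π := by
  rcases hz with rfl | rfl <;> norm_num <;> constructor <;> linarith

lemma milpObjective_eq_Dobj {lam : Fin m → ℝ} {C : Fin n → ℝ} {a : Fin m → Fin n → ℝ}
    {θ β : ℝ} {z g π : Fin n → ℝ} {μ : Fin m → ℝ} {σ : Fin m → Fin n → ℝ}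
    {η τ : Fin m → Fin m → ℝ} {ν : Fin m → ℝ} (hg : ∀ j, g j = (1 - z j) * π j) :
    -(∑ j, C j * g j) + ∑ i, lam i * μ i - ∑ i, ∑ j, C j * a i j * σ i j
      - β * ∑ i, ∑ i' ∈ univ.filter (fun i' => i < i'), (η i i' + τ i i') - θ * ∑ i, ν i =
      Dobj lam C a θ β z π μ σ η τ ν := by
  simp only [Dobj, hg, mul_assoc]

lemma finite_setOf_binary_sum_le (n : ℕ) (K : ℝ) :
    {z : Fin n → ℝ | (∀ j, z j = 0 ∨ z j = 1) ∧ ∑ j, z j ≤ K}.Finite :=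
  (Set.Finite.pi (t := fun _ => {0, 1}) fun _ => by simp).subset fun z hz j _ => hz.1 j

theorem stmt_12_general
    (m n : ℕ)
    (lam : Fin m → ℝ)
    (C : Fin n → ℝ)
    (d : Fin m → Fin n → ℝ)
    (φ : Fin m → ℝ)
    (a : Fin m → Fin n → ℝ)
    (γ : ℝ)
    (θ β : ℝ) (hβ : 0 ≤ β)
    (K : ℕ) (Mbig : Fin n → ℝ)
    (hK : ∀ z : Fin n → ℝ, (∀ j, z j = 0 ∨ z j = 1) → (∑ j, z j) ≤ (K : ℝ) →
      (Feas lam C a θ β z).Nonempty ∧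
      ∃ (π : Fin n → ℝ) (μ : Fin m → ℝ) (σ : Fin m → Fin n → ℝ)
        (η τ : Fin m → Fin m → ℝ) (ν : Fin m → ℝ),
        DualFeasible lam d φ γ π μ σ η τ ν ∧
        (∀ (π' : Fin n → ℝ) (μ' : Fin m → ℝ) (σ' : Fin m → Fin n → ℝ)
          (η' τ' : Fin m → Fin m → ℝ) (ν' : Fin m → ℝ),
          DualFeasible lam d φ γ π' μ' σ' η' τ' ν' →
          Dobj lam C a θ β z π' μ' σ' η' τ' ν' ≤ Dobj lam C a θ β z π μ σ η τ ν) ∧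
        (∀ j, π j ≤ Mbig j)) :
    ∃ v : ℝ,
      IsGreatest {w : ℝ | ∃ z : Fin n → ℝ, (∀ j, z j = 0 ∨ z j = 1) ∧
          (∑ j, z j) ≤ (K : ℝ) ∧
          w = sInf (cost d φ γ '' Feas lam C a θ β z)} v ∧
      IsGreatest {w : ℝ | ∃ (z g π : Fin n → ℝ) (μ : Fin m → ℝ)
          (σ : Fin m → Fin n → ℝ) (η τ : Fin m → Fin m → ℝ) (ν : Fin m → ℝ),
          (∀ j, z j = 0 ∨ z j = 1) ∧ (∑ j, z j) ≤ (K : ℝ) ∧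
          DualFeasible lam d φ γ π μ σ η τ ν ∧
          (∀ j, g j ≤ Mbig j * (1 - z j) ∧ g j ≤ π j ∧ 0 ≤ g j ∧ π j - Mbig j * z j ≤ g j) ∧
          w = -(∑ j, C j * g j) + ∑ i, lam i * μ i - ∑ i, ∑ j, C j * a i j * σ i j
              - β * ∑ i, ∑ i' ∈ univ.filter (fun i' => i < i'), (η i i' + τ i i')
              - θ * ∑ i, ν i} v := by
  obtain ⟨z₀, hz₀, hmax⟩ := Set.exists_max_image _
    (fun z => sInf (cost d φ γ '' Feas lam C a θ β z)) (finite_setOf_binary_sum_le n K)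
    ⟨0, fun _ => .inl rfl, by simp⟩
  refine ⟨_, ⟨⟨z₀, hz₀.1, hz₀.2, rfl⟩, ?_⟩, ?_, ?_⟩
  · rintro _ ⟨z, hz, hzK, rfl⟩
    exact hmax z ⟨hz, hzK⟩
  · obtain ⟨hne, π, μ, σ, η, τ, ν, ht, hopt, hπM⟩ := hK z₀ hz₀.1 hz₀.2
    refine ⟨z₀, fun j => (1 - z₀ j) * π j, π, μ, σ, η, τ, ν, hz₀.1, hz₀.2, ht,
      fun j => bigM_of_nonneg_of_le (hz₀.1 j) (ht.1 j) (hπM j), ?_⟩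
    rw [milpObjective_eq_Dobj fun _ => rfl, sInf_cost_eq_Dobj hβ hne ht hopt]
  · rintro _ ⟨z, g, π, μ, σ, η, τ, ν, hz, hzK, ht, hg, rfl⟩
    rw [milpObjective_eq_Dobj fun j => eq_one_sub_mul_of_bigM (hz j) (hg j)]
    exact (Dobj_le_sInf_cost (hK z hz hzK).1 ht).trans (hmax z ⟨hz, hzK⟩)

theorem stmt_12
    (m n : ℕ) (hm : 1 ≤ m) (hn : 1 ≤ n)
    (lam : Fin m → ℝ) (hlam : ∀ i, 0 < lam i)
    (C : Fin n → ℝ) (hC : ∀ j, 0 ≤ C j)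
    (d : Fin m → Fin n → ℝ) (hd : ∀ i j, 0 ≤ d i j)
    (φ : Fin m → ℝ) (hφ : ∀ i, 0 ≤ φ i)
    (a : Fin m → Fin n → ℝ) (ha : ∀ i j, a i j = 0 ∨ a i j = 1)
    (γ : ℝ) (hγ0 : 0 ≤ γ) (hγ1 : γ ≤ 1)
    (θ β : ℝ) (hθ : 0 ≤ θ) (hβ : 0 ≤ β)
    (K : ℕ) (Mbig : Fin n → ℝ)
    (hK : ∀ z : Fin n → ℝ, (∀ j, z j = 0 ∨ z j = 1) → (∑ j, z j) ≤ (K : ℝ) →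
      (Feas lam C a θ β z).Nonempty ∧
      ∃ (π : Fin n → ℝ) (μ : Fin m → ℝ) (σ : Fin m → Fin n → ℝ)
        (η τ : Fin m → Fin m → ℝ) (ν : Fin m → ℝ),
        DualFeasible lam d φ γ π μ σ η τ ν ∧
        (∀ (π' : Fin n → ℝ) (μ' : Fin m → ℝ) (σ' : Fin m → Fin n → ℝ)
          (η' τ' : Fin m → Fin m → ℝ) (ν' : Fin m → ℝ),
          DualFeasible lam d φ γ π' μ' σ' η' τ' ν' →
          Dobj lam C a θ β z π' μ' σ' η' τ' ν' ≤ Dobj lam C a θ β z π μ σ η τ ν) ∧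
        (∀ j, π j ≤ Mbig j)) :
    ∃ v : ℝ,
      IsGreatest {w : ℝ | ∃ z : Fin n → ℝ, (∀ j, z j = 0 ∨ z j = 1) ∧
          (∑ j, z j) ≤ (K : ℝ) ∧
          w = sInf (cost d φ γ '' Feas lam C a θ β z)} v ∧
      IsGreatest {w : ℝ | ∃ (z g π : Fin n → ℝ) (μ : Fin m → ℝ)
          (σ : Fin m → Fin n → ℝ) (η τ : Fin m → Fin m → ℝ) (ν : Fin m → ℝ),
          (∀ j, z j = 0 ∨ z j = 1) ∧ (∑ j, z j) ≤ (K : ℝ) ∧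
          DualFeasible lam d φ γ π μ σ η τ ν ∧
          (∀ j, g j ≤ Mbig j * (1 - z j) ∧ g j ≤ π j ∧ 0 ≤ g j ∧ π j - Mbig j * z j ≤ g j) ∧
          w = -(∑ j, C j * g j) + ∑ i, lam i * μ i - ∑ i, ∑ j, C j * a i j * σ i j
              - β * ∑ i, ∑ i' ∈ univ.filter (fun i' => i < i'), (η i i' + τ i i')
              - θ * ∑ i, ν i} v :=
  stmt_12_general m n lam C d φ a γ θ β hβ K Mbig hK
end
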